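/- Let A be a bounded normal operator on a complex Hilbert space H and let L ⊆ H be a finite-dimensional subspace. Then σ(S_L) ⊆ Q(σ(A)), and for every z ∉ Q(σ(A)) and every ψ ∈ H one has |⟨(A − z)ψ, (A − conj(z))ψ⟩| ≥ dist(z, Q(σ(A)))² ‖ψ‖². -/

import Mathlib

/-!
For `ψ ≠ 0` the number `⟪ψ, (A* - z)(A - z) ψ⟫ / ‖ψ‖²` lies in the numerical range of the normal
operator `f(A)`, `f(λ) = (λ - z)(conj λ - z)`, hence (Hahn–Banach plus positivity of
`b - Re (c f(A))`) in the closed convex hull of `σ(f(A)) = Σ_z`; its modulus is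
`|⟨(A - z)ψ, (A - conj z)ψ⟩| / ‖ψ‖²`.

Since `(λ - z)(conj λ - z) = z² - (λ + conj λ) z + λ conj λ`, a convex combination of points
of `Σ_z` is the value `(z - z₁)(z - z₂)` at `z` of a monic quadratic whose value at `ζ` is the
same convex combination of points of `Σ_ζ`. So `z₁, z₂ ∈ Q(σ(A))`, and the modulus is at least
`dist(z, Q(σ(A)))²`.

An eigenvector `(z φ, φ)` of `S_L` makes `(A* - z)(A - z) φ` orthogonal to `L ∋ φ`, so `0` is
such a quotient and `z ∈ Q(σ(A))`.
-/

open scoped InnerProductSpace ComplexConjugate Classical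
open Complex ContinuousLinearMap

noncomputable section

variable {H : Type*} [NormedAddCommGroup H] [InnerProductSpace ℂ H] [CompleteSpace H]

/-- Orthogonal projection onto a subspace, as a map into the subspace (junk value `0` if the
subspace admits no orthogonal projection). -/
def projCLM (L : Submodule ℂ H) : H →L[ℂ] ↥L :=
  if h : L.HasOrthogonalProjection then (letI := h; L.orthogonalProjectionOnto) else 0

/-- Compression `P B|_L : L → L` of an operator to a subspace. -/
def compress (B : H →L[ℂ] H) (L : Submodule ℂ H) : ↥L →L[ℂ] ↥L :=
  projCLM L ∘L B ∘L L.subtypeL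

/-- Block operator matrix `[[B11, B12],[B21, B22]]` on `E × E`. -/
def block2 {E : Type*} [NormedAddCommGroup E] [NormedSpace ℂ E]
    (B11 B12 B21 B22 : E →L[ℂ] E) : (E × E) →L[ℂ] (E × E) :=
  ((B11 ∘L ContinuousLinearMap.fst ℂ E E) + (B12 ∘L ContinuousLinearMap.snd ℂ E E)).prod
  ((B21 ∘L ContinuousLinearMap.fst ℂ E E) + (B22 ∘L ContinuousLinearMap.snd ℂ E E))

/-- `S_L = [[P(A + A*)|_L, −P A*A|_L],[I, 0]]` on `L × L`. -/
def SL (A : H →L[ℂ] H) (L : Submodule ℂ H) : (↥L × ↥L) →L[ℂ] (↥L × ↥L) :=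
  block2 (compress (A + ContinuousLinearMap.adjoint A) L)
    (-(compress (ContinuousLinearMap.adjoint A * A) L)) 1 0

/-- The second order spectrum of `A` relative to `L`. -/
def Spec2 (A : H →L[ℂ] H) (L : Submodule ℂ H) : Set ℂ :=
  {z | ∃ φ ∈ L, φ ≠ 0 ∧ ∀ ψ ∈ L, ⟪(A - z • 1) φ, (A - (conj z) • 1) ψ⟫_ℂ = 0}

/-- `Σ_z := {(λ − z)(conj λ − z) : λ ∈ Σ}`. -/
def sigmaSet (S : Set ℂ) (z : ℂ) : Set ℂ := (fun l => (l - z) * ((conj l) - z)) '' S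

/-- `Q(Σ) := {z : 0 ∈ closed convex hull of Σ_z}`. -/
def QSet (S : Set ℂ) : Set ℂ := {z | (0 : ℂ) ∈ closure (convexHull ℝ (sigmaSet S z))}

def evalMonicQuadratic (z : ℂ) : ℂ × ℂ →ᵃ[ℝ] ℂ :=
  ((LinearMap.snd ℂ ℂ ℂ - z • LinearMap.fst ℂ ℂ ℂ).restrictScalars ℝ).toAffineMap +
    AffineMap.const ℝ (ℂ × ℂ) (z ^ 2)

lemma evalMonicQuadratic_apply (z : ℂ) (q : ℂ × ℂ) :
    evalMonicQuadratic z q = z ^ 2 - z * q.1 + q.2 := by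
  simp [evalMonicQuadratic]; ring

lemma exists_evalMonicQuadratic_eq_mul (q : ℂ × ℂ) :
    ∃ z₁ z₂ : ℂ, ∀ ζ : ℂ, evalMonicQuadratic ζ q = (ζ - z₁) * (ζ - z₂) := by
  obtain ⟨δ, hδ⟩ := IsAlgClosed.exists_pow_nat_eq (q.1 ^ 2 - 4 * q.2) two_pos
  refine ⟨(q.1 + δ) / 2, (q.1 - δ) / 2, fun ζ => ?_⟩
  rw [evalMonicQuadratic_apply]
  linear_combination (1 / 4 : ℂ) * hδ

def traceNorm (l : ℂ) : ℂ × ℂ := (l + conj l, l * conj l)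

lemma convexHull_sigmaSet (S : Set ℂ) (z : ℂ) :
    convexHull ℝ (sigmaSet S z) = evalMonicQuadratic z '' convexHull ℝ (traceNorm '' S) := by
  rw [AffineMap.image_convexHull, Set.image_image, sigmaSet]
  congr! 2 with l
  rw [evalMonicQuadratic_apply, traceNorm]
  ring

lemma sq_infDist_QSet_le_norm_of_mem_convexHull {S : Set ℂ} {z w : ℂ}
    (hw : w ∈ convexHull ℝ (sigmaSet S z)) : Metric.infDist z (QSet S) ^ 2 ≤ ‖w‖ := by
  rw [convexHull_sigmaSet] at hw
  obtain ⟨q, hq, rfl⟩ := hw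
  obtain ⟨z₁, z₂, hfac⟩ := exists_evalMonicQuadratic_eq_mul q
  have hroot : ∀ ζ, evalMonicQuadratic ζ q = 0 → Metric.infDist z (QSet S) ≤ ‖z - ζ‖ := by
    intro ζ hζ
    have hζQ : ζ ∈ QSet S := subset_closure <| by
      rw [convexHull_sigmaSet]
      exact ⟨q, hq, hζ⟩
    rw [← dist_eq_norm]
    exact Metric.infDist_le_dist_of_mem hζQ
  have h₁ := hroot z₁ (by rw [hfac, sub_self, zero_mul])
  have h₂ := hroot z₂ (by rw [hfac, sub_self, mul_zero])
  calc Metric.infDist z (QSet S) ^ 2 ≤ ‖z - z₁‖ * ‖z - z₂‖ := by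
        rw [sq]; exact mul_le_mul h₁ h₂ Metric.infDist_nonneg (norm_nonneg _)
    _ = ‖evalMonicQuadratic z q‖ := by rw [hfac, norm_mul]

lemma sq_infDist_QSet_le_norm {S : Set ℂ} {z w : ℂ}
    (hw : w ∈ closure (convexHull ℝ (sigmaSet S z))) : Metric.infDist z (QSet S) ^ 2 ≤ ‖w‖ :=
  closure_minimal (fun _ => sq_infDist_QSet_le_norm_of_mem_convexHull)
    (isClosed_le continuous_const continuous_norm) hw

open scoped ComplexStarModule in
lemma re_inner_le_of_forall_re_le {C : H →L[ℂ] H} [IsStarNormal C] {b : ℝ}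
    (h : ∀ μ ∈ spectrum ℂ C, μ.re ≤ b) (ψ : H) : (⟪ψ, C ψ⟫_ℂ).re ≤ b * ‖ψ‖ ^ 2 := by
  have hle : (ℜ C : H →L[ℂ] H) ≤ algebraMap ℝ (H →L[ℂ] H) b := by
    refine le_algebraMap_of_spectrum_le ?_
    rw [spectrum_realPart' C]
    rintro _ ⟨μ, hμ, rfl⟩
    exact h μ hμ
  have hpos := ((ContinuousLinearMap.le_def _ _).mp hle).re_inner_nonneg_right ψ
  have hre : (⟪ψ, star C ψ⟫_ℂ).re = (⟪ψ, C ψ⟫_ℂ).re := by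
    rw [star_eq_adjoint, adjoint_inner_right, ← inner_conj_symm, Complex.conj_re]
  have hnorm : (⟪ψ, ψ⟫_ℂ).re = ‖ψ‖ ^ 2 := inner_self_eq_norm_sq (𝕜 := ℂ) ψ
  simp only [realPart_apply_coe, smul_add, sub_apply, ContinuousLinearMap.algebraMap_apply,
    add_apply, smul_apply, ← Complex.coe_smul, inner_sub_right, inner_add_right, inner_smul_right,
    RCLike.re_to_complex, Complex.sub_re, Complex.add_re, Complex.re_ofReal_mul, hre, hnorm] at hpos
  linarith

lemma inner_div_inner_self_mem_closure_convexHull_spectrum {C : H →L[ℂ] H} [IsStarNormal C]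
    {ψ : H} (hψ : ψ ≠ 0) : ⟪ψ, C ψ⟫_ℂ / ⟪ψ, ψ⟫_ℂ ∈ closure (convexHull ℝ (spectrum ℂ C)) := by
  by_contra hnot
  obtain ⟨f, u, hf, hu⟩ := RCLike.geometric_hahn_banach_closed_point (𝕜 := ℂ)
    (convex_convexHull ℝ _).closure isClosed_closure hnot
  have hfc : ∀ x, f x = f 1 * x := fun x => by simpa [mul_comm] using f.map_smul x 1
  have hD : cfc (f 1 * ·) C = f 1 • C := cfc_const_mul_id _ C
  have : IsStarNormal (f 1 • C) := hD ▸ cfc_predicate _ C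
  have hle := re_inner_le_of_forall_re_le (C := f 1 • C) (b := u) (by
    rw [← hD, cfc_map_spectrum _ C]
    rintro _ ⟨μ, hμ, rfl⟩
    have hμu := hf μ (subset_closure (subset_convexHull ℝ _ hμ))
    rw [hfc] at hμu
    exact hμu.le) ψ
  have hnorm : 0 < ‖ψ‖ ^ 2 := by positivity
  have hψψ : ⟪ψ, ψ⟫_ℂ = ((‖ψ‖ ^ 2 : ℝ) : ℂ) := by
    push_cast; exact inner_self_eq_norm_sq_to_K ψ
  rw [hfc, hψψ, ← mul_div_assoc, RCLike.re_to_complex, Complex.div_ofReal_re,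
    lt_div_iff₀ hnorm] at hu
  simp only [smul_apply, inner_smul_right] at hle
  linarith

lemma cfc_sub_mul_conj_sub (A : H →L[ℂ] H) [IsStarNormal A] (z : ℂ) :
    cfc (fun l : ℂ => (l - z) * (conj l - z)) A = (star A - z • 1) * (A - z • 1) := by
  rw [show (fun l : ℂ => (l - z) * (conj l - z)) = fun l => (star l - z) * (l - z) from
      funext fun _ => mul_comm _ _, cfc_mul .., cfc_sub .., cfc_sub .., cfc_star_id (a := A),
    cfc_id' ℂ A, cfc_const z A, Algebra.algebraMap_eq_smul_one]

lemma inner_div_inner_self_mem_closure_convexHull_sigmaSet (A : H →L[ℂ] H) [IsStarNormal A]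
    (z : ℂ) {ψ : H} (hψ : ψ ≠ 0) :
    ⟪ψ, ((star A - z • 1) * (A - z • 1)) ψ⟫_ℂ / ⟪ψ, ψ⟫_ℂ ∈
      closure (convexHull ℝ (sigmaSet (spectrum ℂ A) z)) := by
  have : IsStarNormal (cfc (fun l : ℂ => (l - z) * (conj l - z)) A) := cfc_predicate _ A
  rw [← cfc_sub_mul_conj_sub, sigmaSet, ← cfc_map_spectrum _ A]
  exact inner_div_inner_self_mem_closure_convexHull_spectrum hψ

lemma inner_sub_smul_one_sub_conj_smul_one (A : H →L[ℂ] H) (z : ℂ) (φ ψ : H) :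
    ⟪(A - z • 1) φ, (A - conj z • 1) ψ⟫_ℂ = ⟪((star A - z • 1) * (A - z • 1)) φ, ψ⟫_ℂ := by
  have : star A - z • 1 = adjoint (A - conj z • 1) := by rw [← star_eq_adjoint]; simp
  rw [this]
  exact (adjoint_inner_left _ _ _).symm

lemma mem_QSet_of_inner_eq_zero {A : H →L[ℂ] H} [IsStarNormal A] {z : ℂ} {ψ : H} (hψ : ψ ≠ 0)
    (h : ⟪(A - z • 1) ψ, (A - conj z • 1) ψ⟫_ℂ = 0) : z ∈ QSet (spectrum ℂ A) := by
  have hmem := inner_div_inner_self_mem_closure_convexHull_sigmaSet A z hψ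
  rwa [inner_eq_zero_symm.mp ((inner_sub_smul_one_sub_conj_smul_one A z ψ ψ).symm.trans h),
    zero_div] at hmem

lemma sq_infDist_QSet_mul_sq_norm_le (A : H →L[ℂ] H) [IsStarNormal A] (z : ℂ) (ψ : H) :
    Metric.infDist z (QSet (spectrum ℂ A)) ^ 2 * ‖ψ‖ ^ 2 ≤
      ‖⟪(A - z • 1) ψ, (A - conj z • 1) ψ⟫_ℂ‖ := by
  rcases eq_or_ne ψ 0 with rfl | hψ
  · simp
  have hle := sq_infDist_QSet_le_norm (inner_div_inner_self_mem_closure_convexHull_sigmaSet A z hψ)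
  rwa [norm_div, ← inner_conj_symm, ← inner_sub_smul_one_sub_conj_smul_one, RCLike.norm_conj,
    inner_self_eq_norm_sq_to_K, norm_pow, RCLike.norm_ofReal, abs_norm,
    le_div_iff₀ (by positivity)] at hle

lemma exists_apply_eq_smul_of_mem_spectrum {𝕜 E : Type*} [NontriviallyNormedField 𝕜]
    [CompleteSpace 𝕜] [NormedAddCommGroup E] [NormedSpace 𝕜 E] [FiniteDimensional 𝕜 E]
    {T : E →L[𝕜] E} {z : 𝕜} (hz : z ∈ spectrum 𝕜 T) : ∃ v ≠ 0, T v = z • v := by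
  have := FiniteDimensional.complete 𝕜 E
  rw [ContinuousLinearMap.spectrum_eq, ← Module.End.hasEigenvalue_iff_mem_spectrum] at hz
  obtain ⟨v, hv⟩ := hz.exists_hasEigenvector
  exact ⟨v, hv.2, hv.apply_eq_smul⟩

lemma SL_apply (A : H →L[ℂ] H) (L : Submodule ℂ H) (v : ↥L × ↥L) :
    SL A L v = (compress (A + adjoint A) L v.1 - compress (adjoint A * A) L v.2, v.1) := by
  simp [SL, block2, sub_eq_add_neg]

lemma spectrum_SL_subset_Spec2 (A : H →L[ℂ] H) (L : Submodule ℂ H) [FiniteDimensional ℂ ↥L] :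
    spectrum ℂ (SL A L) ⊆ Spec2 A L := by
  intro z hz
  obtain ⟨v, hv, hSv⟩ := exists_apply_eq_smul_of_mem_spectrum hz
  rw [SL_apply, Prod.smul_def] at hSv
  obtain ⟨h₁, h₂⟩ := Prod.mk.inj hSv
  have hv₂ : v.2 ≠ 0 := fun h => hv (Prod.ext (by rw [h₂, h, smul_zero]; rfl) h)
  have hproj : projCLM L = L.orthogonalProjectionOnto := dif_pos _
  refine ⟨v.2, v.2.2, by simpa using hv₂, fun ψ hψ => ?_⟩
  have hT : (star A - z • 1) * (A - z • 1) = adjoint A * A - z • (A + adjoint A) + z ^ 2 • 1 := by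
    rw [star_eq_adjoint]
    simp only [sub_mul, mul_sub, smul_mul_assoc, mul_smul_comm, one_mul, mul_one]
    module
  have hP : projCLM L (((star A - z • 1) * (A - z • 1)) v.2) = 0 := by
    have hPv : projCLM L v.2 = v.2 := by
      rw [hproj]; exact Submodule.orthogonalProjectionOnto_mem_subspace_eq_self v.2
    rw [hT, add_apply, sub_apply, smul_apply, smul_apply, one_apply_eq_self, map_add, map_sub,
      map_smul, map_smul, hPv]
    change compress (adjoint A * A) L v.2 - z • compress (A + adjoint A) L v.2 + z ^ 2 • v.2 = 0
    rw [h₂, map_smul] at h₁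
    linear_combination (norm := module) -h₁
  rw [inner_sub_smul_one_sub_conj_smul_one,
    ← Submodule.inner_orthogonalProjectionOnto_eq_of_mem_right ⟨ψ, hψ⟩, ← hproj, hP,
    inner_zero_left]

lemma Spec2_subset_QSet (A : H →L[ℂ] H) [IsStarNormal A] (L : Submodule ℂ H) :
    Spec2 A L ⊆ QSet (spectrum ℂ A) :=
  fun _ ⟨φ, hφL, hφ, h⟩ => mem_QSet_of_inner_eq_zero hφ (h φ hφL)

/-- Lemma 4.1: `σ(S_L) ⊆ Q(σ(A))`, and for `z ∉ Q(σ(A))` one has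
`|⟨(A − z)ψ, (A − conj z)ψ⟩| ≥ dist(z, Q(σ(A)))² ‖ψ‖²` for all `ψ`. -/
theorem stmt10 (A : H →L[ℂ] H) (hA : IsStarNormal A) (L : Submodule ℂ H)
    [FiniteDimensional ℂ ↥L] :
    spectrum ℂ (SL A L) ⊆ QSet (spectrum ℂ A) ∧
      ∀ z ∉ QSet (spectrum ℂ A), ∀ ψ : H,
        Metric.infDist z (QSet (spectrum ℂ A)) ^ 2 * ‖ψ‖ ^ 2 ≤
          ‖⟪(A - z • 1) ψ, (A - (conj z) • 1) ψ⟫_ℂ‖ :=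
  ⟨(spectrum_SL_subset_Spec2 A L).trans (Spec2_subset_QSet A L),
    fun z _ ψ => sq_infDist_QSet_mul_sq_norm_le A z ψ⟩

end
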